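/- arXiv:1812.03889 — 3 statements merged into one kernel-verified Lean document; each statement's English description precedes it below -/
import Mathlib

section
/- Let σ > 0 and α > 0. Define β*(σ) = σ/2 + √(σ²/4 − α) if σ ≥ 2√α, and β*(σ) = √α otherwise. Then for every β ≥ 0, |σ·β*(σ)/(β*(σ)² + α) − 1| ≤ |σ·β/(β² + α) − 1|. In particular, if σ ≥ 2√α then σ·β*(σ)/(β*(σ)² + α) = 1. -/
/-! For `σ ≥ 2√α` the quadratic `β² - σβ + α` has the real root `β*`, at which `σβ/(β² + α) = 1`
exactly. Otherwise, by AM-GM `β² + α ≥ 2√α β`, the ratio is at most `σ/(2√α) < 1` for every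
`β`, with equality at `β = √α`, so `√α` brings it closest to `1`. -/

open Real

theorem sq_add_eq_mul_of_le {α σ : ℝ} (h : α ≤ σ ^ 2 / 4) :
    (σ / 2 + √(σ ^ 2 / 4 - α)) ^ 2 + α = σ * (σ / 2 + √(σ ^ 2 / 4 - α)) := by
  linear_combination sq_sqrt (sub_nonneg.mpr h)

theorem mul_div_sq_add_eq_one {α σ : ℝ} (hσ : 0 < σ) (h : α ≤ σ ^ 2 / 4) :
    σ * (σ / 2 + √(σ ^ 2 / 4 - α)) / ((σ / 2 + √(σ ^ 2 / 4 - α)) ^ 2 + α) = 1 := by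
  rw [sq_add_eq_mul_of_le h]
  exact div_self (by positivity)

theorem mul_div_sq_add_le_at_sqrt {α σ β : ℝ} (hα : 0 < α) (hσ : 0 ≤ σ) :
    σ * β / (β ^ 2 + α) ≤ σ * √α / (√α ^ 2 + α) := by
  have hsq : √α ^ 2 = α := sq_sqrt hα.le
  rw [hsq, div_le_div_iff₀ (by positivity) (by positivity)]
  have am_gm : 2 * α * β ≤ √α * (β ^ 2 + α) := by
    have h : √α * (β ^ 2 + α) - 2 * α * β = √α * (β - √α) ^ 2 := by
      linear_combination (2 * β - √α) * hsq
    linarith [mul_nonneg (sqrt_nonneg α) (sq_nonneg (β - √α))]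
  nlinarith [mul_le_mul_of_nonneg_left am_gm hσ]

theorem mul_sqrt_div_sq_add_lt_one {α σ : ℝ} (hα : 0 < α) (h : σ < 2 * √α) :
    σ * √α / (√α ^ 2 + α) < 1 := by
  have hsqrt : 0 < √α := sqrt_pos.mpr hα
  rw [sq_sqrt hα.le, div_lt_one (by positivity)]
  nlinarith [sq_sqrt hα.le]

theorem optimal_singular_values_general
    (α σ : ℝ) (hσ : 0 < σ) :
    let βs : ℝ := if 2 * Real.sqrt α ≤ σ then σ / 2 + Real.sqrt (σ^2 / 4 - α)
      else Real.sqrt α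
    (∀ β : ℝ, 0 ≤ β →
      |σ * βs / (βs^2 + α) - 1| ≤ |σ * β / (β^2 + α) - 1|) ∧
    (2 * Real.sqrt α ≤ σ → σ * βs / (βs^2 + α) = 1) := by
  intro βs
  by_cases hc : 2 * √α ≤ σ
  · have hle : α ≤ σ ^ 2 / 4 := by
      rcases le_or_gt α 0 with hα | hα
      · nlinarith [sq_nonneg σ]
      · nlinarith [sq_sqrt hα.le, sqrt_nonneg α]
    have hone : σ * βs / (βs ^ 2 + α) = 1 := by
      simpa only [βs, if_pos hc] using mul_div_sq_add_eq_one hσ hle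
    refine ⟨fun β _ => ?_, fun _ => hone⟩
    simpa only [hone, sub_self, abs_zero] using abs_nonneg _
  · have hlt : σ < 2 * √α := not_le.mp hc
    have hα : 0 < α := sqrt_pos.mp (by linarith)
    refine ⟨fun β _ => ?_, fun h => absurd h hc⟩
    simp only [βs, if_neg hc]
    have hmax := mul_div_sq_add_le_at_sqrt (β := β) hα hσ.le
    have hbelow := mul_sqrt_div_sq_add_lt_one hα hlt
    rw [abs_of_neg (sub_neg.mpr hbelow)]
    linarith [neg_abs_le (σ * β / (β ^ 2 + α) - 1)]

theorem optimal_singular_values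
    (α σ : ℝ) (hα : 0 < α) (hσ : 0 < σ) :
    let βs : ℝ := if 2 * Real.sqrt α ≤ σ then σ / 2 + Real.sqrt (σ^2 / 4 - α)
      else Real.sqrt α
    (∀ β : ℝ, 0 ≤ β →
      |σ * βs / (βs^2 + α) - 1| ≤ |σ * β / (β^2 + α) - 1|) ∧
    (2 * Real.sqrt α ≤ σ → σ * βs / (βs^2 + α) = 1) :=
  optimal_singular_values_general α σ hσ
end

section
/- Let σ > 0 and α > 0 with β*(σ) = σ/2 + √(σ²/4 − α) for σ ≥ 2√α and β*(σ) = √α otherwise. Then the filter σ·β*(σ)/(β*(σ)² + α) equals 1 when σ ≥ 2√α and equals σ/(2√α) when σ < 2√α. -/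
/-!
When `σ ≥ 2√α` the value `β*(σ)` is the larger root of `β² - σβ + α = 0`, so `β² + α = σβ` and
the filter is `1`. Otherwise `β* = √α` and the denominator is `2α = 2√α · √α`.
-/

theorem mul_div_sq_add_sq_self {K : Type*} [Field K] (σ s : K) :
    σ * s / (s ^ 2 + s ^ 2) = σ / (2 * s) := by
  rcases eq_or_ne s 0 with rfl | hs
  · simp
  · rw [← two_mul, sq, ← mul_assoc, mul_div_mul_right σ (2 * s) hs]

namespace Real

theorem mul_sqrt_div_sq_sqrt_add_self (σ : ℝ) {α : ℝ} (hα : 0 ≤ α) :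
    σ * √α / (√α ^ 2 + α) = σ / (2 * √α) := by
  calc σ * √α / (√α ^ 2 + α) = σ * √α / (√α ^ 2 + √α ^ 2) := by rw [sq_sqrt hα]
    _ = σ / (2 * √α) := mul_div_sq_add_sq_self σ √α

theorem le_sq_div_four_of_two_mul_sqrt_le {α σ : ℝ} (h : 2 * √α ≤ σ) : α ≤ σ ^ 2 / 4 := by
  have := (sqrt_le_iff.mp (show √α ≤ σ / 2 by linarith)).2
  linarith

theorem half_add_sqrt_sq_add_eq_mul {α σ : ℝ} (h : α ≤ σ ^ 2 / 4) :
    (σ / 2 + √(σ ^ 2 / 4 - α)) ^ 2 + α = σ * (σ / 2 + √(σ ^ 2 / 4 - α)) := by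
  linear_combination sq_sqrt (sub_nonneg.mpr h)

end Real

theorem analytic_deep_prior_is_soft_tsvd_general
    (α σ : ℝ) (hα : 0 < α) :
    let βs : ℝ := if 2 * Real.sqrt α ≤ σ then σ / 2 + Real.sqrt (σ^2 / 4 - α)
      else Real.sqrt α
    σ * βs / (βs^2 + α) =
      if 2 * Real.sqrt α ≤ σ then 1 else σ / (2 * Real.sqrt α) := by
  intro βs
  by_cases h : 2 * √α ≤ σ
  · have hσ : 0 < σ := by linarith [Real.sqrt_pos.mpr hα]
    simp only [βs, if_pos h]
    rw [Real.half_add_sqrt_sq_add_eq_mul (Real.le_sq_div_four_of_two_mul_sqrt_le h),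
      div_self (by positivity)]
  · simp only [βs, if_neg h]
    exact Real.mul_sqrt_div_sq_sqrt_add_self σ hα.le

theorem analytic_deep_prior_is_soft_tsvd
    (α σ : ℝ) (hα : 0 < α) (hσ : 0 < σ) :
    let βs : ℝ := if 2 * Real.sqrt α ≤ σ then σ / 2 + Real.sqrt (σ^2 / 4 - α)
      else Real.sqrt α
    σ * βs / (βs^2 + α) =
      if 2 * Real.sqrt α ≤ σ then 1 else σ / (2 * Real.sqrt α) :=
  analytic_deep_prior_is_soft_tsvd_general α σ hα
end

section
/- Let α > 0 and σ, δ, η > 0 with η sufficiently small. Consider the iteration β_{ℓ+1} = β_ℓ − c(β_ℓ) where c(β) = η·σ·(σ+δ)²·(α + β² − σβ)·(β² − α)/(β² + α)³. If σ < 2√α then β = √α is an attractive fixed point (i.e., c(√α) = 0 and c′(√α) > 0). If σ > 2√α, then both β = σ/2 ± √(σ²/4 − α) are fixed points with c′ > 0 there, while c′(√α) < 0 (so √α is repulsive). -/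
/-!
Write `c = K p q / r` with `K = η σ (σ + δ)²`, `p β = β² - σ β + α`, `q β = β² - α` and
`r β = (β² + α)³ > 0`. At a zero of `p q` the quotient rule collapses to `c' = K (p q)' / r`, and
the product rule leaves only one term: `c'(√α) = K p(√α) q'(√α) / r = K (2√α - σ) / (4α²)`, while
at a root `β = σ/2 + t` of `p` (so `t² = σ²/4 - α`) one gets `c'(β) = 2K t² (σ + 2t) / r(β)`.
Both signs are then read off directly.
-/

theorem HasDerivAt.div_of_left_eq_zero {𝕜 : Type*} [NontriviallyNormedField 𝕜]
    {f g : 𝕜 → 𝕜} {f' g' x : 𝕜} (hf : HasDerivAt f f' x) (hg : HasDerivAt g g' x) (hgx : g x ≠ 0)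
    (hfx : f x = 0) : HasDerivAt (fun y => f y / g y) (f' / g x) x := by
  refine (hf.fun_div hg hgx).congr_deriv ?_
  rw [hfx, zero_mul, sub_zero, sq, ← div_div, mul_div_cancel_right₀ _ hgx]

noncomputable def adpUpdate (K α σ β : ℝ) : ℝ :=
  K * (α + β ^ 2 - σ * β) * (β ^ 2 - α) / (β ^ 2 + α) ^ 3

section

variable {K α σ : ℝ}

theorem hasDerivAt_adpUpdate_of_eq_zero {β : ℝ} (hα : 0 < α) (hβ : adpUpdate K α σ β = 0) :
    HasDerivAt (adpUpdate K α σ)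
      (K * ((2 * β - σ) * (β ^ 2 - α) + (α + β ^ 2 - σ * β) * (2 * β)) / (β ^ 2 + α) ^ 3) β := by
  have hr : (β ^ 2 + α) ^ 3 ≠ 0 := by positivity
  have hpq : HasDerivAt (fun x => K * (α + x ^ 2 - σ * x) * (x ^ 2 - α))
      (K * ((2 * β - σ) * (β ^ 2 - α) + (α + β ^ 2 - σ * β) * (2 * β))) β := by
    have hp := ((hasDerivAt_pow 2 β).const_add α).fun_sub ((hasDerivAt_id' β).const_mul σ)
    refine (hp.const_mul K).fun_mul ((hasDerivAt_pow 2 β).sub_const α) |>.congr_deriv ?_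
    norm_num
    ring
  refine hpq.div_of_left_eq_zero (((hasDerivAt_pow 2 β).add_const α).fun_pow 3) hr ?_
  simpa [adpUpdate, hr] using hβ

theorem adpUpdate_sqrt (hα : 0 < α) : adpUpdate K α σ (√α) = 0 := by
  simp [adpUpdate, Real.sq_sqrt hα.le]

theorem adpUpdate_half_add {t : ℝ} (ht : t ^ 2 = σ ^ 2 / 4 - α) :
    adpUpdate K α σ (σ / 2 + t) = 0 := by
  have : α + (σ / 2 + t) ^ 2 - σ * (σ / 2 + t) = 0 := by linear_combination ht
  simp [adpUpdate, this]

theorem hasDerivAt_adpUpdate_sqrt (hα : 0 < α) :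
    HasDerivAt (adpUpdate K α σ) (K * (2 * √α - σ) / (4 * α ^ 2)) (√α) := by
  convert hasDerivAt_adpUpdate_of_eq_zero hα (adpUpdate_sqrt hα) using 1
  have h := Real.sq_sqrt hα.le
  rw [h]
  field_simp
  linear_combination 8 * K * σ * h

theorem hasDerivAt_adpUpdate_half_add (hα : 0 < α) {t : ℝ} (ht : t ^ 2 = σ ^ 2 / 4 - α) :
    HasDerivAt (adpUpdate K α σ) (2 * K * t ^ 2 * (σ + 2 * t) / ((σ / 2 + t) ^ 2 + α) ^ 3)
      (σ / 2 + t) := by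
  convert hasDerivAt_adpUpdate_of_eq_zero hα (adpUpdate_half_add ht) using 2
  linear_combination (-K * σ) * ht

end

theorem fixed_points_of_adp_iteration
    (α σ δ η : ℝ) (hα : 0 < α) (hσ : 0 < σ) (hδ : 0 < δ) (hη : 0 < η) :
    let c : ℝ → ℝ := fun β =>
      η * σ * (σ + δ)^2 * (α + β^2 - σ * β) * (β^2 - α) / (β^2 + α)^3
    (σ < 2 * Real.sqrt α →
      c (Real.sqrt α) = 0 ∧ 0 < deriv c (Real.sqrt α)) ∧
    (2 * Real.sqrt α < σ →
      (c (σ / 2 + Real.sqrt (σ^2 / 4 - α)) = 0 ∧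
        0 < deriv c (σ / 2 + Real.sqrt (σ^2 / 4 - α))) ∧
      (c (σ / 2 - Real.sqrt (σ^2 / 4 - α)) = 0 ∧
        0 < deriv c (σ / 2 - Real.sqrt (σ^2 / 4 - α))) ∧
      deriv c (Real.sqrt α) < 0) := by
  intro c
  have hc : c = adpUpdate (η * σ * (σ + δ) ^ 2) α σ := rfl
  clear_value c
  subst hc
  have hK : 0 < η * σ * (σ + δ) ^ 2 := by positivity
  have hsqrt : 0 < √α := Real.sqrt_pos.2 hα
  refine ⟨fun hlt => ⟨adpUpdate_sqrt hα, ?_⟩, fun hgt => ?_⟩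
  · rw [(hasDerivAt_adpUpdate_sqrt hα).deriv]
    exact div_pos (mul_pos hK (by linarith)) (by positivity)
  have hs0 : 0 < σ ^ 2 / 4 - α := by nlinarith [Real.sq_sqrt hα.le]
  set s := √(σ ^ 2 / 4 - α)
  have hs2 : s ^ 2 = σ ^ 2 / 4 - α := Real.sq_sqrt hs0.le
  have hs : 0 < s := Real.sqrt_pos.2 hs0
  have attractive (t : ℝ) (ht : t ^ 2 = σ ^ 2 / 4 - α) (ht0 : t ≠ 0) (hσt : 0 < σ + 2 * t) :
      adpUpdate (η * σ * (σ + δ) ^ 2) α σ (σ / 2 + t) = 0 ∧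
        0 < deriv (adpUpdate (η * σ * (σ + δ) ^ 2) α σ) (σ / 2 + t) := by
    refine ⟨adpUpdate_half_add ht, ?_⟩
    rw [(hasDerivAt_adpUpdate_half_add hα ht).deriv]
    exact div_pos (mul_pos (by positivity) hσt) (by positivity)
  refine ⟨attractive s hs2 hs.ne' (by linarith), ?_, ?_⟩
  · rw [sub_eq_add_neg]
    exact attractive (-s) (by rw [neg_sq, hs2]) (neg_ne_zero.2 hs.ne') (by nlinarith)
  · rw [(hasDerivAt_adpUpdate_sqrt hα).deriv]
    exact div_neg_of_neg_of_pos (mul_neg_of_pos_of_neg hK (by linarith)) (by positivity)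
end
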